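/- arXiv:1907.09502 — 9 statements merged into one kernel-verified Lean document; each statement's English description precedes it below -/
import Mathlib

section
/- Let f : ℝ³ → ℝ be real-analytic on an open neighbourhood of the origin, and suppose there is an open neighbourhood W of (0,0) in ℝ² such that f(u, u·v, u·v·exp(v)) = 0 for all (u,v) ∈ W. Then f vanishes identically on some open neighbourhood of the origin in ℝ³. (Property of the Osgood mapping Θ(u,v) = (u, uv, uv·e^v): no nonzero analytic function defined near 0 ∈ ℝ³ vanishes on the image of any neighbourhood of 0 ∈ ℝ².) -/
/-!
Write `Θ(u, v) = u • γ(v)` with `γ(v) = (1, v, v eᵛ)`, and let `f = ∑ Pₙ` be the expansion of `f`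
at the origin into homogeneous polynomials. For fixed small `v` the function
`u ↦ f(u γ(v)) = ∑ Pₙ(γ(v)) uⁿ` vanishes near `0`, so `Pₙ(γ(v)) = 0`, and by analyticity in `v`
this holds for every `v`. Expanded in monomials, `Pₙ(γ(v))` is a combination of the functions
`vᵃ e^{cv}`, which are linearly independent (compare their growth at `+∞`); since `Pₙ` is
homogeneous, its monomial `y₁^(n-a) y₂^(a-c) y₃^c` is determined by `(a, c)`. Hence `Pₙ = 0`
on the diagonal and `f` vanishes on the ball of convergence.
-/

open Filter Topology Polynomial Finset Real

lemma Polynomial.tendsto_eval_mul_exp_neg_atTop (P : ℝ[X]) {c : ℝ} (hc : 0 < c) :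
    Tendsto (fun t => P.eval t * exp (-(c * t))) atTop (𝓝 0) := by
  refine ((P.comp (C c⁻¹ * X)).tendsto_div_exp_atTop.comp
    (tendsto_id.const_mul_atTop hc)).congr fun t => ?_
  simp [eval_comp, exp_neg, div_eq_mul_inv, hc.ne']

lemma eq_zero_of_forall_sum_eval_mul_exp_eq_zero {s : Finset ℝ} {Q : ℝ → ℝ[X]}
    (h : ∀ t, ∑ c ∈ s, (Q c).eval t * exp (c * t) = 0) : ∀ c ∈ s, Q c = 0 := by
  induction s using Finset.induction_on_max with
  | empty => simp
  | insert a s hlt ih =>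
    have hQa : Q a = 0 := by
      -- after multiplying by `exp (-(a * t))`, every other term tends to `0` at `+∞`
      have heq : ∀ t, (Q a).eval t = -∑ c ∈ s, (Q c).eval t * exp (-((a - c) * t)) := by
        intro t
        have := congrArg (· * exp (-(a * t))) (h t)
        simp only [sum_insert (fun ha => (hlt a ha).false), add_mul, sum_mul, zero_mul,
          mul_assoc, ← exp_add] at this
        rw [eq_neg_iff_add_eq_zero, ← this]
        congr 1
        · simp
        · refine sum_congr rfl fun c _ => ?_
          ring_nf
      have hlim : Tendsto (fun t => (Q a).eval t) atTop (𝓝 0) := by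
        simp only [heq]
        simpa using (tendsto_finsetSum s fun c hc =>
          (Q c).tendsto_eval_mul_exp_neg_atTop (sub_pos.mpr (hlt c hc))).neg
      exact leadingCoeff_eq_zero.mp ((tendsto_nhds_iff _).mp hlim).1
    have hs : ∀ t, ∑ c ∈ s, (Q c).eval t * exp (c * t) = 0 := by
      simpa [sum_insert (fun ha => (hlt a ha).false), hQa] using h
    simpa [hQa] using ih hs

theorem linearIndependent_pow_mul_exp :
    LinearIndependent ℝ (fun p : ℕ × ℝ => fun t : ℝ => t ^ p.1 * exp (p.2 * t)) := by
  classical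
  refine linearIndependent_iff'.mpr fun s g hg p hp => ?_
  set Q : ℝ → ℝ[X] := fun c => ∑ q ∈ s with q.2 = c, C (g q) * X ^ q.1
  have hQ : ∀ t, ∑ c ∈ s.image Prod.snd, (Q c).eval t * exp (c * t) = 0 := by
    intro t
    have := congrFun hg t
    simp only [Finset.sum_apply, Pi.smul_apply, smul_eq_mul, Pi.zero_apply] at this
    rw [← this, ← sum_fiberwise_of_maps_to (fun q hq => mem_image_of_mem Prod.snd hq)]
    refine sum_congr rfl fun c _ => ?_
    simp only [Q, eval_finsetSum, sum_mul]
    refine sum_congr rfl fun q hq => ?_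
    rw [(mem_filter.mp hq).2]
    simp [mul_assoc]
  have := congrArg (coeff · p.1) (eq_zero_of_forall_sum_eval_mul_exp_eq_zero hQ p.2
    (mem_image_of_mem _ hp))
  simp only [Q, finsetSum_coeff, coeff_C_mul, coeff_X_pow, mul_ite, mul_one, mul_zero,
    coeff_zero] at this
  rwa [sum_eq_single_of_mem (s := {q ∈ s | q.2 = p.2}) p (mem_filter.mpr ⟨hp, rfl⟩)
    fun q hq hqp => if_neg fun h1 => hqp (Prod.ext h1.symm (mem_filter.mp hq).2), if_pos rfl]
    at this

theorem LinearIndependent.sum_smul_comp_eq_zero {ι κ R M N : Type*} [Ring R]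
    [AddCommGroup M] [Module R M] [AddCommMonoid N] [Module R N] {v : κ → M}
    (hv : LinearIndependent R v) {s : Finset ι} {K : ι → R} {φ : ι → κ}
    (h : ∑ i ∈ s, K i • v (φ i) = 0) (w : κ → N) : ∑ i ∈ s, K i • w (φ i) = 0 := by
  have hsingle : ∑ i ∈ s, Finsupp.single (φ i) (K i) = 0 :=
    linearIndependent_iff.mp hv _ (by simpa [map_sum, Finsupp.linearCombination_single] using h)
  simpa [map_sum, Finsupp.linearCombination_single] using
    congrArg (Finsupp.linearCombination R w) hsingle

theorem MultilinearMap.map_diag_sum_smul {R κ M N : Type*} [CommSemiring R] [Fintype κ]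
    [DecidableEq κ] [AddCommMonoid M] [Module R M] [AddCommMonoid N] [Module R N] {n : ℕ}
    (B : MultilinearMap R (fun _ : Fin n => M) N) (x : κ → R) (e : κ → M) :
    B (fun _ => ∑ j, x j • e j) =
      ∑ s : Fin n → κ, (∏ j, x j ^ #{i | s i = j}) • B (fun i => e (s i)) := by
  rw [B.map_sum]
  refine sum_congr rfl fun s _ => ?_
  rw [B.map_smul_univ, ← Finset.prod_fiberwise' univ s x]
  simp [prod_const]

theorem HasFPowerSeriesAt.apply_eq_zero_of_eventually_smul {𝕜 E F : Type*}
    [NontriviallyNormedField 𝕜] [NormedAddCommGroup E] [NormedSpace 𝕜 E] [NormedAddCommGroup F]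
    [NormedSpace 𝕜 F] {f : E → F} {p : FormalMultilinearSeries 𝕜 E F}
    (hf : HasFPowerSeriesAt f p 0) {y : E} (h : ∀ᶠ t : 𝕜 in 𝓝 0, f (t • y) = 0) (n : ℕ) :
    p n (fun _ => y) = 0 := by
  set u : 𝕜 →L[𝕜] E := (ContinuousLinearMap.id 𝕜 𝕜).smulRight y
  have hline : HasFPowerSeriesAt (f ∘ u) (p.compContinuousLinearMap u) 0 :=
    (u.map_zero ▸ hf).compContinuousLinearMap
  have := congrArg (fun q => q n (fun _ => 1)) (hline.eq_zero_of_eventually h)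
  simp only [FormalMultilinearSeries.compContinuousLinearMap_apply] at this
  simpa [u, Function.comp_def] using this

noncomputable def osgoodCurve (v : ℝ) : ℝ × ℝ × ℝ := (1, v, v * exp v)

lemma analyticAt_osgoodCurve (v : ℝ) : AnalyticAt ℝ osgoodCurve v :=
  analyticAt_const.prod (analyticAt_id.prod (analyticAt_id.mul analyticAt_rexp))

theorem ContinuousMultilinearMap.apply_diag_eq_zero_of_eventually_osgoodCurve {n : ℕ}
    (B : ContinuousMultilinearMap ℝ (fun _ : Fin n => ℝ × ℝ × ℝ) ℝ)
    (h : ∀ᶠ v in 𝓝 0, B (fun _ => osgoodCurve v) = 0) (y : ℝ × ℝ × ℝ) :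
    B (fun _ => y) = 0 := by
  classical
  set e : Fin 3 → ℝ × ℝ × ℝ := ![(1, 0, 0), (0, 1, 0), (0, 0, 1)]
  set cnt : (Fin n → Fin 3) → Fin 3 → ℕ := fun s j => #{i | s i = j}
  have hexpand (z : ℝ × ℝ × ℝ) : B (fun _ => z) =
      ∑ s, (∏ j, ![z.1, z.2.1, z.2.2] j ^ cnt s j) • B (fun i => e (s i)) := by
    have hz : ∑ j, ![z.1, z.2.1, z.2.2] j • e j = z := by simp [e, Fin.sum_univ_three]
    conv_lhs => rw [← hz]
    exact B.toMultilinearMap.map_diag_sum_smul _ e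
  have hcurve : ∀ v, B (fun _ => osgoodCurve v) = 0 := fun v =>
    AnalyticOnNhd.eqOn_zero_of_preconnected_of_eventuallyEq_zero
      (fun v _ => B.analyticAt.comp (AnalyticAt.pi fun _ => analyticAt_osgoodCurve v))
      isPreconnected_univ (Set.mem_univ 0) h (Set.mem_univ v)
  -- on the curve the monomial of `s` is `t ^ (φ s).1 * exp ((φ s).2 * t)`; by homogeneity
  -- (`hcnt`) the monomial itself is also determined by `φ s`
  set φ : (Fin n → Fin 3) → ℕ × ℕ := fun s => (cnt s 1 + cnt s 2, cnt s 2)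
  set g : ℕ × ℕ → ℝ → ℝ := fun p t => t ^ p.1 * exp (p.2 * t)
  have hg : LinearIndependent ℝ g := linearIndependent_pow_mul_exp.comp (Prod.map id Nat.cast)
    (Prod.map_injective.mpr ⟨Function.injective_id, Nat.cast_injective⟩)
  have hrel : ∑ s, B (fun i => e (s i)) • g (φ s) = 0 := by
    funext t
    rw [Pi.zero_apply, ← hcurve t, hexpand, Finset.sum_apply]
    refine sum_congr rfl fun s _ => ?_
    simp only [g, φ, osgoodCurve, Fin.prod_univ_three, Pi.smul_apply, smul_eq_mul,
      Matrix.cons_val_zero, Matrix.cons_val_one, Matrix.cons_val, one_pow, one_mul, mul_pow,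
      pow_add, ← exp_nat_mul]
    ring
  have hcnt (s : Fin n → Fin 3) : cnt s 0 + cnt s 1 + cnt s 2 = n := by
    simpa [Fin.sum_univ_three] using
      (card_eq_sum_card_fiberwise (s := univ) (t := univ) (f := s) (by simp)).symm
  rw [hexpand, ← hg.sum_smul_comp_eq_zero hrel
    (fun p => y.1 ^ (n - p.1) * y.2.1 ^ (p.1 - p.2) * y.2.2 ^ p.2)]
  refine sum_congr rfl fun s _ => ?_
  have h0 : n - (φ s).1 = cnt s 0 := by simp only [φ]; have := hcnt s; omega
  have h1 : (φ s).1 - (φ s).2 = cnt s 1 := by simp only [φ]; omega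
  rw [h0, h1, smul_eq_mul, smul_eq_mul, mul_comm, Fin.prod_univ_three]
  rfl

theorem osgood_vanishing_general (f : ℝ × ℝ × ℝ → ℝ) (U : Set (ℝ × ℝ × ℝ))
    (hU0 : (0 : ℝ × ℝ × ℝ) ∈ U)
    (hf : ∀ x ∈ U, AnalyticAt ℝ f x)
    (W : Set (ℝ × ℝ)) (hW : IsOpen W) (hW0 : ((0, 0) : ℝ × ℝ) ∈ W)
    (hvan : ∀ p ∈ W, f (p.1, p.1 * p.2, p.1 * p.2 * Real.exp p.2) = 0) :
    ∃ V : Set (ℝ × ℝ × ℝ), IsOpen V ∧ (0 : ℝ × ℝ × ℝ) ∈ V ∧ ∀ x ∈ V, f x = 0 := by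
  obtain ⟨p, r, hp⟩ := hf 0 hU0
  have hline (v : ℝ) (hv : (0, v) ∈ W) : ∀ᶠ u : ℝ in 𝓝 0, f (u • osgoodCurve v) = 0 := by
    filter_upwards [(Continuous.prodMk_left v).continuousAt.preimage_mem_nhds (hW.mem_nhds hv)]
      with u hu
    simpa [osgoodCurve, mul_assoc] using hvan (u, v) hu
  have hW' : ∀ᶠ v : ℝ in 𝓝 0, (0, v) ∈ W :=
    (Continuous.prodMk_right 0).continuousAt.preimage_mem_nhds (hW.mem_nhds hW0)
  have hdiag (n : ℕ) : ∀ y, p n (fun _ => y) = 0 :=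
    (p n).apply_diag_eq_zero_of_eventually_osgoodCurve <| hW'.mono fun v hv =>
      hp.hasFPowerSeriesAt.apply_eq_zero_of_eventually_smul (hline v hv) n
  refine ⟨Metric.eball 0 r, Metric.isOpen_eball, Metric.mem_eball_self hp.r_pos, fun x hx => ?_⟩
  have hsum := hp.hasSum hx
  simp only [hdiag, zero_add] at hsum
  exact hsum.unique hasSum_zero

/-- Property of the Osgood mapping `Θ(u,v) = (u, uv, uv·e^v)`: if `f` is real-analytic on an
open neighbourhood of the origin in `ℝ³` and vanishes on the image of a neighbourhood of
`(0,0) ∈ ℝ²` under `Θ`, then `f` vanishes identically near the origin. -/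
theorem osgood_vanishing (f : ℝ × ℝ × ℝ → ℝ) (U : Set (ℝ × ℝ × ℝ))
    (hU : IsOpen U) (hU0 : (0 : ℝ × ℝ × ℝ) ∈ U)
    (hf : ∀ x ∈ U, AnalyticAt ℝ f x)
    (W : Set (ℝ × ℝ)) (hW : IsOpen W) (hW0 : ((0, 0) : ℝ × ℝ) ∈ W)
    (hvan : ∀ p ∈ W, f (p.1, p.1 * p.2, p.1 * p.2 * Real.exp p.2) = 0) :
    ∃ V : Set (ℝ × ℝ × ℝ), IsOpen V ∧ (0 : ℝ × ℝ × ℝ) ∈ V ∧ ∀ x ∈ V, f x = 0 :=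
  osgood_vanishing_general f U hU0 hf W hW hW0 hvan
end

section
/- Let δ > 0. Define θ(s) = 1/(δ·s − 1/π) for s < 1/(δπ), and h(s) = (sin θ(s) · cos(θ(s)²), sin θ(s) · sin(θ(s)²)) ∈ ℝ². Then every point of the closed disk {(1/(δπ), x, y) ∈ ℝ³ : x² + y² ≤ 1} lies in the closure in ℝ³ of the graph {(s, h₁(s), h₂(s)) : s < 1/(δπ)}. -/
/-!
As `s ↑ 1/(δπ)` we have `θ(s) → -∞`, and `h(s) = sin θ · (cos θ², sin θ²)` is a point at signed
distance `sin θ` from the origin in direction `θ²`. Given a target `r (cos φ, sin φ)`, the square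
roots `u` of `φ + 2πℤ` realise the direction exactly, and beyond any `w > 0` one of them lies
within `π / w` of `w`; choosing `w` large with `sin w = -r` thus gives arbitrarily large such `u`
with `sin u` as close to `-r` as we like, and `θ = -u` does the job.
-/

open Real Set

lemma exists_sq_eq_sub_int_mul_two_pi (φ : ℝ) {w : ℝ} (hw : 0 < w) :
    ∃ u : ℝ, w ≤ u ∧ u ≤ w + π / w ∧ ∃ n : ℤ, u ^ 2 = φ - n * (2 * π) := by
  set v := toIcoMod two_pi_pos (w ^ 2) φ
  obtain ⟨hwv, hv⟩ : w ^ 2 ≤ v ∧ v < w ^ 2 + 2 * π := toIcoMod_mem_Ico _ _ _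
  have hsq : √v ^ 2 = v := sq_sqrt ((sq_nonneg w).trans hwv)
  refine ⟨√v, le_sqrt_of_sq_le hwv, ?_, toIcoDiv two_pi_pos (w ^ 2) φ, ?_⟩
  · have : (w + π / w) ^ 2 = w ^ 2 + 2 * π + (π / w) ^ 2 := by field_simp; ring
    exact sqrt_le_iff.2 ⟨by positivity, by nlinarith [sq_nonneg (π / w)]⟩
  · rw [hsq, ← zsmul_eq_mul, self_sub_toIcoDiv_zsmul]

lemma exists_lt_abs_sin_sub_lt_sq_eq (t φ W : ℝ) (ht : t ∈ Icc (-1) 1) {ε : ℝ} (hε : 0 < ε) :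
    ∃ u : ℝ, W < u ∧ |sin u - t| < ε ∧ ∃ n : ℤ, u ^ 2 = φ - n * (2 * π) := by
  set w := toIocMod two_pi_pos (max W (π / ε)) (arcsin t)
  obtain ⟨hw, -⟩ : max W (π / ε) < w ∧ _ := toIocMod_mem_Ioc _ _ _
  have hWw : W < w := (le_max_left _ _).trans_lt hw
  have hπw : π / ε < w := (le_max_right _ _).trans_lt hw
  have hw0 : 0 < w := (div_pos pi_pos hε).trans hπw
  have hsin : sin w = t := by
    rw [show w = _ from (self_sub_toIocDiv_zsmul ..).symm, zsmul_eq_mul, sin_sub_int_mul_two_pi,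
      sin_arcsin ht.1 ht.2]
  obtain ⟨u, hwu, huw, hu⟩ := exists_sq_eq_sub_int_mul_two_pi φ hw0
  refine ⟨u, hWw.trans_le hwu, ?_, hu⟩
  calc |sin u - t| = |sin u - sin w| := by rw [hsin]
    _ ≤ |u - w| := abs_sin_sub_sin_le u w
    _ ≤ π / w := abs_le.2 ⟨by linarith, by linarith⟩
    _ < ε := (div_lt_comm₀ hε hw0).1 hπw

lemma dist_mul_cos_mul_sin_le (a b φ : ℝ) :
    dist (a * cos φ, a * sin φ) (b * cos φ, b * sin φ) ≤ |a - b| := by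
  rw [Prod.dist_eq, dist_eq, dist_eq, ← sub_mul, ← sub_mul, abs_mul, abs_mul]
  exact max_le (mul_le_of_le_one_right (abs_nonneg _) (abs_cos_le_one φ))
    (mul_le_of_le_one_right (abs_nonneg _) (abs_sin_le_one φ))

noncomputable def spiral (θ : ℝ) : ℝ × ℝ := (sin θ * cos (θ ^ 2), sin θ * sin (θ ^ 2))

lemma exists_lt_dist_spiral_lt {x y : ℝ} (hxy : x ^ 2 + y ^ 2 ≤ 1) (W : ℝ) {ε : ℝ}
    (hε : 0 < ε) : ∃ θ < W, dist (spiral θ) (x, y) < ε := by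
  set z : ℂ := ⟨x, y⟩
  have hz : ‖z‖ ≤ 1 := by
    rw [← sq_le_one_iff₀ (norm_nonneg z), Complex.sq_norm, Complex.normSq_mk]
    linarith
  obtain ⟨u, hWu, hu, n, hun⟩ := exists_lt_abs_sin_sub_lt_sq_eq (-‖z‖) z.arg (-W)
    ⟨neg_le_neg hz, by linarith [norm_nonneg z]⟩ hε
  refine ⟨-u, by linarith, ?_⟩
  have hsin : |sin (-u) - ‖z‖| < ε := by rwa [sin_neg, ← abs_neg, neg_sub', neg_neg]
  show dist _ (z.re, z.im) < ε
  rw [spiral, neg_sq, hun, cos_sub_int_mul_two_pi, sin_sub_int_mul_two_pi,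
    ← Complex.norm_mul_cos_arg, ← Complex.norm_mul_sin_arg]
  exact (dist_mul_cos_mul_sin_le _ _ _).trans_lt hsin

/-- Every point of the closed disk `{(1/(δπ), x, y) : x² + y² ≤ 1}` lies in the closure of the
graph of `h(s) = (sin θ(s)·cos(θ(s)²), sin θ(s)·sin(θ(s)²))`, where
`θ(s) = 1/(δs − 1/π)`, over `s < 1/(δπ)`. -/
theorem disk_subset_closure_graph (δ : ℝ) (hδ : 0 < δ)
    (θ : ℝ → ℝ) (hθ : ∀ s : ℝ, θ s = 1 / (δ * s - 1 / Real.pi))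
    (h : ℝ → ℝ × ℝ)
    (hh : ∀ s : ℝ, h s = (Real.sin (θ s) * Real.cos ((θ s) ^ 2),
      Real.sin (θ s) * Real.sin ((θ s) ^ 2))) :
    ∀ x y : ℝ, x ^ 2 + y ^ 2 ≤ 1 →
      ((1 / (δ * Real.pi), x, y) : ℝ × ℝ × ℝ) ∈
        closure {q : ℝ × ℝ × ℝ |
          ∃ s : ℝ, s < 1 / (δ * Real.pi) ∧ q = (s, (h s).1, (h s).2)} := by
  intro x y hxy
  refine Metric.mem_closure_iff.2 fun ε hε => ?_
  obtain ⟨t, ht, hdist⟩ := exists_lt_dist_spiral_lt hxy (-1 / (δ * ε)) hε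
  have ht0 : t < 0 := ht.trans (div_neg_of_neg_of_pos neg_one_lt_zero (by positivity))
  set s := (1 / t + 1 / π) / δ
  have hθs : θ s = t := by
    rw [hθ, mul_div_cancel₀ _ hδ.ne', add_sub_cancel_right, one_div_one_div]
  have hgap : 1 / (δ * π) - s = -1 / (δ * t) := by
    simp only [s]
    field_simp
    ring
  have hgap_pos : 0 < -1 / (δ * t) := div_pos_of_neg_of_neg neg_one_lt_zero (by nlinarith)
  have hgap_lt : -1 / (δ * t) < ε := by
    rw [div_lt_iff_of_neg (by nlinarith)]
    rw [lt_div_iff₀ (by positivity)] at ht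
    linarith
  have hhs : h s = spiral t := by rw [hh, hθs, spiral]
  refine ⟨(s, (h s).1, (h s).2), ⟨s, by linarith, rfl⟩, ?_⟩
  rw [Prod.dist_eq, dist_eq, hgap, abs_of_pos hgap_pos, Prod.mk.eta, hhs, dist_comm]
  exact max_lt hgap_lt hdist
end

section
/- Let (A, m) be a commutative local ring and let X : A → A be a derivation that is singular, i.e. X(a) ∈ m for every a ∈ A. Let I be an ideal of A, let d ∈ ℕ, and let f, f_0, …, f_d, F ∈ A with F ∈ I be such that: F = f_0 + ⋯ + f_d + r for some r in the principal ideal (f); X(f) ∈ (f); and for each i = 0, …, d one has X(f_i) = U_i · f_i, where each U_i is a unit of A and U_i − U_j is a unit of A whenever i ≠ j (i.e. the residues of the U_i in A/m are pairwise distinct). Then f_i ∈ I_d^{{X}} + (f) for every i = 0, …, d. -/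
/-- The chain of ideals `I_0^Δ = I`, `I_{k+1}^Δ = I_k^Δ + (X(f) : X ∈ Δ, f ∈ I_k^Δ)`
associated to a set `Δ` of maps `A → A` and an ideal `I`. -/
def derivChain {A : Type*} [CommRing A] (Δ : Set (A → A)) (I : Ideal A) : ℕ → Ideal A
  | 0 => I
  | k + 1 => derivChain Δ I k ⊔
      Ideal.span {y : A | ∃ X ∈ Δ, ∃ g ∈ derivChain Δ I k, y = X g}

private lemma derivChain_mono' {A : Type*} [CommRing A] (Δ : Set (A → A)) (I : Ideal A)
    {k d : ℕ} (h : k ≤ d) : derivChain Δ I k ≤ derivChain Δ I d := by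
  induction d with
  | zero => rw [Nat.le_zero.mp h]
  | succ n ih =>
    rcases Nat.lt_or_ge k (n + 1) with h' | h'
    · exact le_trans (ih (Nat.lt_succ_iff.mp h')) le_sup_left
    · rw [le_antisymm h h']

private lemma isUnit_finset_prod {A : Type*} [CommRing A] {ι : Type*} (s : Finset ι)
    (g : ι → A) (h : ∀ i ∈ s, IsUnit (g i)) : IsUnit (∏ i ∈ s, g i) :=
  Finset.prod_induction g IsUnit (fun _ _ => IsUnit.mul) isUnit_one h

/-- Computation of the chain of ideals (Lemma on eigenvector decompositions): if a singular
derivation `X` of a local ring splits `F ∈ I` as a sum of eigenvectors with pairwise distinct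
unit eigenvalues, modulo `(f)`, then each eigencomponent lies in `I_d^{{X}} + (f)`. -/
theorem eigencomponents_mem_derivChain {A : Type*} [CommRing A] [IsLocalRing A]
    (X : A → A)
    (hadd : ∀ a b : A, X (a + b) = X a + X b)
    (hleib : ∀ a b : A, X (a * b) = X a * b + a * X b)
    (hsing : ∀ a : A, X a ∈ IsLocalRing.maximalIdeal A)
    (I : Ideal A) (d : ℕ) (f : A) (f' : ℕ → A) (U : ℕ → A) (F : A)
    (hF : F ∈ I)
    (hdecomp : ∃ r ∈ Ideal.span {f}, F = (∑ i ∈ Finset.range (d + 1), f' i) + r)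
    (hXf : X f ∈ Ideal.span {f})
    (hXfi : ∀ i ≤ d, X (f' i) = U i * f' i)
    (hunit : ∀ i ≤ d, IsUnit (U i))
    (hdist : ∀ i j : ℕ, i ≤ d → j ≤ d → i ≠ j → IsUnit (U i - U j)) :
    ∀ i ≤ d, f' i ∈ derivChain {X} I d ⊔ Ideal.span {f} := by
  classical
  set m := IsLocalRing.maximalIdeal A with hm
  set J : Ideal A := derivChain {X} I d ⊔ Ideal.span {f} with hJ
  -- X as an additive hom
  let Xh : A →+ A := AddMonoidHom.mk' X hadd
  have hXh : ∀ a, Xh a = X a := fun a => rfl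
  -- X stabilizes (f)
  have hspanf : ∀ a ∈ Ideal.span {f}, X a ∈ Ideal.span ({f} : Set A) := by
    intro a ha
    rw [Ideal.mem_span_singleton] at ha
    obtain ⟨c, rfl⟩ := ha
    rw [hleib]
    exact Ideal.add_mem _ (Ideal.mul_mem_right _ _ hXf)
      (Ideal.mul_mem_right _ _ (Ideal.mem_span_singleton_self f))
  -- chain monotone and step
  have hstep : ∀ k, ∀ g ∈ derivChain {X} I k, X g ∈ derivChain {X} I (k + 1) := by
    intro k g hg
    refine Ideal.mem_sup_right (Ideal.subset_span ?_)
    exact ⟨X, rfl, g, hg, rfl⟩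
  have hmono : ∀ k ≤ d, derivChain {X} I k ≤ derivChain {X} I d := fun k hk =>
    derivChain_mono' {X} I hk
  have hiter : ∀ k, X^[k] F ∈ derivChain {X} I k := by
    intro k
    induction k with
    | zero => exact hF
    | succ n ih =>
      rw [Function.iterate_succ_apply']
      exact hstep n _ ih
  -- the eigenvalue sequence
  let V : ℕ → ℕ → A := fun i => Nat.rec 1 (fun _ v => X v + v * U i)
  have hV0 : ∀ i, V i 0 = 1 := fun i => rfl
  have hVs : ∀ i k, V i (k + 1) = X (V i k) + V i k * U i := fun i k => rfl
  have hVm : ∀ i ≤ d, ∀ k, V i k - U i ^ k ∈ m := by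
    intro i hi k
    induction k with
    | zero => simp [hV0]
    | succ n ih =>
      have : V i (n + 1) - U i ^ (n + 1) = X (V i n) + (V i n - U i ^ n) * U i := by
        rw [hVs]; ring
      rw [this]
      exact Ideal.add_mem _ (hsing _) (Ideal.mul_mem_right _ _ ih)
  -- key congruence
  have hkey : ∀ k, X^[k] F - ∑ i ∈ Finset.range (d + 1), V i k * f' i ∈
      Ideal.span ({f} : Set A) := by
    intro k
    induction k with
    | zero =>
      obtain ⟨r, hr, hFeq⟩ := hdecomp
      simp only [Function.iterate_zero_apply, hV0, one_mul, hFeq]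
      simpa using hr
    | succ n ih =>
      have hXsub : ∀ a b : A, X (a - b) = X a - X b := fun a b => map_sub Xh a b
      have hXsum : ∀ g : ℕ → A, X (∑ i ∈ Finset.range (d + 1), g i) =
          ∑ i ∈ Finset.range (d + 1), X (g i) := fun g => map_sum Xh g _
      have heq : X (X^[n] F - ∑ i ∈ Finset.range (d + 1), V i n * f' i) =
          X^[n + 1] F - ∑ i ∈ Finset.range (d + 1), V i (n + 1) * f' i := by
        rw [hXsub, hXsum, Function.iterate_succ_apply']
        congr 1
        refine Finset.sum_congr rfl fun i hi => ?_
        have hid : i ≤ d := Nat.lt_succ_iff.mp (Finset.mem_range.mp hi)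
        rw [hleib, hXfi i hid, hVs]
        ring
      rw [← heq]
      exact hspanf _ ih
  have hsumJ : ∀ k ≤ d, ∑ i ∈ Finset.range (d + 1), V i k * f' i ∈ J := by
    intro k hk
    have h1 : X^[k] F ∈ J := Ideal.mem_sup_left (hmono k hk (hiter k))
    have h2 : X^[k] F - ∑ i ∈ Finset.range (d + 1), V i k * f' i ∈ J :=
      Ideal.mem_sup_right (hkey k)
    have := Ideal.sub_mem _ h1 h2
    simpa using this
  -- matrix setup
  set M : Matrix (Fin (d + 1)) (Fin (d + 1)) A := Matrix.of fun k i => V i k with hM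
  set w : Fin (d + 1) → A := fun i => f' i with hw
  have hMw : ∀ k : Fin (d + 1), M.mulVec w k ∈ J := by
    intro k
    have : M.mulVec w k = ∑ i ∈ Finset.range (d + 1), V i k * f' i := by
      rw [Matrix.mulVec, dotProduct, ← Fin.sum_univ_eq_sum_range
        (fun i => V i (k : ℕ) * f' i)]
      rfl
    rw [this]
    exact hsumJ k (Nat.lt_succ_iff.mp k.isLt)
  -- det M * f' i ∈ J
  have hdetJ : ∀ i : Fin (d + 1), M.det * f' i ∈ J := by
    intro i
    have h1 : (M.adjugate).mulVec (M.mulVec w) = M.det • w := by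
      rw [Matrix.mulVec_mulVec, Matrix.adjugate_mul, Matrix.smul_mulVec,
        Matrix.one_mulVec]
    have h2 : (M.adjugate).mulVec (M.mulVec w) i ∈ J := by
      rw [Matrix.mulVec, dotProduct]
      exact Ideal.sum_mem _ fun j _ => Ideal.mul_mem_left _ _ (hMw j)
    rw [h1] at h2
    simpa using h2
  -- det M is a unit
  have hdetU : IsUnit M.det := by
    set Vd : Matrix (Fin (d + 1)) (Fin (d + 1)) A :=
      (Matrix.vandermonde fun i : Fin (d + 1) => U i).transpose with hVd
    have hcong : M.det - Vd.det ∈ m := by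
      rw [← Ideal.Quotient.eq_zero_iff_mem, map_sub, sub_eq_zero,
        RingHom.map_det, RingHom.map_det]
      congr 1
      ext k i
      simp only [RingHom.mapMatrix_apply, Matrix.map_apply, hM, Matrix.of_apply,
        hVd, Matrix.transpose_apply, Matrix.vandermonde_apply]
      rw [← sub_eq_zero, ← map_sub, Ideal.Quotient.eq_zero_iff_mem]
      exact hVm i (Nat.lt_succ_iff.mp i.isLt) k
    have hVdU : IsUnit Vd.det := by
      rw [hVd, Matrix.det_transpose, Matrix.det_vandermonde]
      refine isUnit_finset_prod _ _ fun i _ => isUnit_finset_prod _ _ fun j hj => ?_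
      have hlt : i < j := Finset.mem_Ioi.mp hj
      have hij : (j : ℕ) ≠ (i : ℕ) := fun h => absurd (Fin.ext h) (ne_of_lt hlt).symm
      exact hdist j i (Nat.lt_succ_iff.mp j.isLt) (Nat.lt_succ_iff.mp i.isLt) hij
    by_contra h
    have hMm : M.det ∈ m := (IsLocalRing.mem_maximalIdeal _).mpr h
    have : Vd.det ∈ m := by
      have := Ideal.sub_mem _ hMm hcong
      simpa using this
    exact ((IsLocalRing.mem_maximalIdeal _).mp this) hVdU
  -- conclude
  intro i hi
  obtain ⟨u, hu⟩ := hdetU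
  have h := hdetJ ⟨i, Nat.lt_succ_iff.mpr hi⟩
  have : f' i = (↑u⁻¹ : A) * (M.det * f' i) := by
    rw [← mul_assoc, ← hu, Units.inv_mul, one_mul]
  rw [this]
  exact Ideal.mul_mem_left _ _ h
end

section
/- Let K be a field of characteristic zero and let R = K⟦u_1, …, u_r⟧ be the ring of formal power series in r variables over K. For i = 1, …, r let E_i : R → R be the Euler operator u_i·∂/∂u_i, i.e. the K-linear map determined by coeff_γ(E_i f) = γ_i · coeff_γ(f) for every f ∈ R and γ ∈ ℕ^r. If I ⊆ R is an ideal with E_i(I) ⊆ I for every i = 1, …, r, then I is generated by the monomials it contains; that is, I equals the ideal of R generated by {u^γ : γ ∈ ℕ^r, u^γ ∈ I}. -/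
/-!
Applying `∏ᵢ ∏_{k < nᵢ} (Eᵢ - k)` to `f ∈ I` multiplies the coefficient of `u^m` by
`∏ᵢ ∏_{k < nᵢ} (mᵢ - k)`, which vanishes unless `n ≤ m` and is a nonzero integer at `m = n`.
So if `u^n` occurs in `f`, then `I` contains `u^n` times a unit, hence `u^n`. Conversely, by
Dickson's lemma the support of any `f` has finitely many minimal exponents, and `f` is a
combination of the corresponding monomials with power series coefficients.
-/

theorem Set.IsPWO.exists_finset_subset_forall_exists_le {α : Type*} [PartialOrder α]
    {s : Set α} (hs : s.IsPWO) : ∃ t : Finset α, ↑t ⊆ s ∧ ∀ a ∈ s, ∃ b ∈ t, b ≤ a := by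
  have hmin : {x | Minimal (· ∈ s) x}.Finite :=
    (setOfPred_minimal_antichain _).finite_of_partiallyWellOrderedOn
      (hs.mono (setOfPred_minimal_subset s))
  refine ⟨hmin.toFinset, by simpa using setOfPred_minimal_subset s, fun a ha => ?_⟩
  obtain ⟨b, hba, hb⟩ := hs.exists_le_minimal ha
  exact ⟨b, hmin.mem_toFinset.2 hb, hba⟩

namespace MvPowerSeries

section Monomial

variable {σ R : Type*}

theorem exists_eq_monomial_one_mul_of_coeff_eq_zero [CommSemiring R] {n : σ →₀ ℕ}
    {φ : MvPowerSeries σ R} (hφ : ∀ m, ¬ n ≤ m → coeff m φ = 0) :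
    ∃ ψ, φ = monomial n 1 * ψ ∧ constantCoeff ψ = coeff n φ := by
  let ψ : MvPowerSeries σ R := fun δ => coeff (n + δ) φ
  refine ⟨ψ, ?_, by rw [← coeff_zero_eq_constantCoeff_apply, ← add_zero n]; rfl⟩
  ext m
  rw [coeff_monomial_mul]
  split_ifs with h
  · change _ = 1 * coeff (n + (m - n)) φ
    rw [one_mul, add_tsub_cancel_of_le h]
  · exact hφ m h

theorem associated_monomial_of_coeff_eq_zero [CommRing R] {n : σ →₀ ℕ}
    {φ : MvPowerSeries σ R} (hφ : ∀ m, ¬ n ≤ m → coeff m φ = 0) (hn : IsUnit (coeff n φ)) :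
    Associated (monomial n (1 : R)) φ := by
  obtain ⟨ψ, rfl, hψ⟩ := exists_eq_monomial_one_mul_of_coeff_eq_zero hφ
  have hunit : IsUnit ψ := isUnit_iff_constantCoeff.2 (hψ ▸ hn)
  exact ⟨hunit.unit, rfl⟩

theorem mem_span_monomial_of_forall_exists_le [CommSemiring R] (B : Finset (σ →₀ ℕ))
    (φ : MvPowerSeries σ R) (hB : ∀ m, coeff m φ ≠ 0 → ∃ b ∈ B, b ≤ m) :
    φ ∈ Ideal.span ((fun b => monomial b (1 : R)) '' B) := by
  classical
  have : ∀ m, ∃ b, coeff m φ ≠ 0 → b ∈ B ∧ b ≤ m := fun m => by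
    by_cases h : coeff m φ = 0
    · exact ⟨0, fun h' => absurd h h'⟩
    · obtain ⟨b, hb, hbm⟩ := hB m h
      exact ⟨b, fun _ => ⟨hb, hbm⟩⟩
  choose c hc using this
  -- `piece b` collects the terms of `φ` whose exponent is assigned to `b`, divided by `X ^ b`
  let piece (b : σ →₀ ℕ) : MvPowerSeries σ R := fun δ =>
    if c (b + δ) = b then coeff (b + δ) φ else 0
  have hcoeff (m b : σ →₀ ℕ) : coeff m (monomial b 1 * piece b) =
      if c m = b ∧ coeff m φ ≠ 0 then coeff m φ else 0 := by
    rw [coeff_monomial_mul]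
    by_cases hbm : b ≤ m
    · rw [if_pos hbm, one_mul]
      change (if c (b + (m - b)) = b then coeff (b + (m - b)) φ else 0) = _
      rw [add_tsub_cancel_of_le hbm]
      by_cases h0 : coeff m φ = 0 <;> simp [h0]
    · rw [if_neg hbm, eq_comm, ite_eq_right_iff]
      rintro ⟨rfl, h0⟩
      exact absurd (hc m h0).2 hbm
  have hφ : φ = ∑ b ∈ B, monomial b 1 * piece b := by
    ext m
    simp only [map_sum, hcoeff]
    by_cases h0 : coeff m φ = 0
    · simp [h0]
    · rw [Finset.sum_eq_single_of_mem (c m) (hc m h0).1 fun b _ hb => if_neg fun h => hb h.1.symm]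
      exact (if_pos ⟨rfl, h0⟩).symm
  rw [hφ]
  exact Ideal.sum_mem _ fun b hb =>
    Ideal.mul_mem_right _ _ (Ideal.subset_span ⟨b, hb, rfl⟩)

theorem mem_span_monomial_support [CommSemiring R] [Finite σ] (φ : MvPowerSeries σ R) :
    φ ∈ Ideal.span ((fun m => monomial m (1 : R)) '' {m | coeff m φ ≠ 0}) := by
  obtain ⟨B, hBφ, hB⟩ :=
    (Set.isPWO_of_wellQuasiOrderedLE {m | coeff m φ ≠ 0}).exists_finset_subset_forall_exists_le
  exact Ideal.span_mono (Set.image_mono hBφ) (mem_span_monomial_of_forall_exists_le B φ hB)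

end Monomial

section Euler

variable {σ : Type*}

theorem exists_mem_coeff_eq_eval_mul {K : Type*} [CommSemiring K]
    (E : σ → MvPowerSeries σ K →ₗ[K] MvPowerSeries σ K)
    (hE : ∀ i f m, coeff m (E i f) = (m i : K) * coeff m f)
    {I : Ideal (MvPowerSeries σ K)} (hI : ∀ i, ∀ f ∈ I, E i f ∈ I)
    (P : MvPolynomial σ K) {f : MvPowerSeries σ K} (hf : f ∈ I) :
    ∃ g ∈ I, ∀ m, coeff m g = MvPolynomial.eval (fun i => (m i : K)) P * coeff m f := by
  induction P using MvPolynomial.induction_on with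
  | C a => exact ⟨a • f, Submodule.smul_of_tower_mem I a hf, by simp⟩
  | add P Q hP hQ =>
    obtain ⟨g, hgI, hg⟩ := hP
    obtain ⟨h, hhI, hh⟩ := hQ
    exact ⟨g + h, add_mem hgI hhI, fun m => by simp [hg, hh, add_mul]⟩
  | mul_X P i hP =>
    obtain ⟨g, hgI, hg⟩ := hP
    exact ⟨E i g, hI i g hgI, fun m => by
      rw [hE, hg, map_mul, MvPolynomial.eval_X]
      ring⟩

theorem monomial_mem_of_coeff_ne_zero {K : Type*} [Field K] [CharZero K]
    (E : σ → MvPowerSeries σ K →ₗ[K] MvPowerSeries σ K)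
    (hE : ∀ i f m, coeff m (E i f) = (m i : K) * coeff m f)
    {I : Ideal (MvPowerSeries σ K)} (hI : ∀ i, ∀ f ∈ I, E i f ∈ I)
    {f : MvPowerSeries σ K} (hf : f ∈ I) {n : σ →₀ ℕ} (hn : coeff n f ≠ 0) :
    monomial n (1 : K) ∈ I := by
  obtain ⟨g, hgI, hg⟩ := exists_mem_coeff_eq_eval_mul E hE hI
    (∏ i ∈ n.support, ∏ k ∈ Finset.range (n i), (MvPolynomial.X i - MvPolynomial.C (k : K))) hf
  simp only [map_prod, map_sub, MvPolynomial.eval_X, MvPolynomial.eval_C] at hg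
  have hvanish : ∀ m, ¬ n ≤ m → coeff m g = 0 := by
    intro m hm
    obtain ⟨i, hi, hmi⟩ : ∃ i ∈ n.support, m i < n i := by simpa [Finsupp.le_iff] using hm
    rw [hg, Finset.prod_eq_zero hi (Finset.prod_eq_zero (Finset.mem_range.2 hmi) (sub_self _)),
      zero_mul]
  have hunit : IsUnit (coeff n g) := by
    rw [hg, isUnit_iff_ne_zero]
    refine mul_ne_zero (Finset.prod_ne_zero_iff.2 fun i _ => Finset.prod_ne_zero_iff.2
      fun k hk => sub_ne_zero.2 ?_) hn
    exact_mod_cast (Finset.mem_range.1 hk).ne'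
  exact I.mem_of_dvd (associated_monomial_of_coeff_eq_zero hvanish hunit).symm.dvd hgI

end Euler

end MvPowerSeries

/-- If an ideal of a formal power series ring over a field of characteristic zero is closed
under all Euler operators `u_i ∂/∂u_i`, then it is generated by the monomials it contains. -/
theorem euler_closed_ideal_monomially_generated {K : Type*} [Field K] [CharZero K] (r : ℕ)
    (E : Fin r → (MvPowerSeries (Fin r) K →ₗ[K] MvPowerSeries (Fin r) K))
    (hE : ∀ (i : Fin r) (f : MvPowerSeries (Fin r) K) (γ : Fin r →₀ ℕ),
      MvPowerSeries.coeff γ (E i f) = (γ i : K) * MvPowerSeries.coeff γ f)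
    (I : Ideal (MvPowerSeries (Fin r) K))
    (hI : ∀ i : Fin r, ∀ f ∈ I, E i f ∈ I) :
    I = Ideal.span {f : MvPowerSeries (Fin r) K |
      (∃ γ : Fin r →₀ ℕ, f = MvPowerSeries.monomial γ (1 : K)) ∧ f ∈ I} := by
  refine le_antisymm (fun f hf => ?_) (Ideal.span_le.2 fun _ hp => hp.2)
  refine Ideal.span_mono ?_ (MvPowerSeries.mem_span_monomial_support f)
  rintro _ ⟨γ, hγ, rfl⟩
  exact ⟨⟨γ, rfl⟩, MvPowerSeries.monomial_mem_of_coeff_ne_zero E hE hI hf hγ⟩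
end

section
/- Let K be a field of characteristic zero, let α_1, …, α_p ∈ ℕ^r be linearly independent over ℚ, and let G ∈ K⟦u_1, …, u_r, v_1, …, v_s, w_1, …, w_t⟧ with coefficients g_{γδε} (γ ∈ ℕ^r, δ ∈ ℕ^s, ε ∈ ℕ^t). Then the following are equivalent: (a) for every c ∈ ℤ^r with ⟨c, α_j⟩ = 0 for all j = 1, …, p, the K-linear operator X_c determined by coeff_{(γ,δ,ε)}(X_c F) = ⟨c, γ⟩ · coeff_{(γ,δ,ε)}(F) annihilates G, and the formal partial derivative ∂G/∂w_l is zero for every l = 1, …, t; (b) g_{γδε} = 0 whenever ε ≠ 0, and whenever g_{γδ0} ≠ 0 the vector γ lies in the ℚ-linear span of α_1, …, α_p. -/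
/-!
In characteristic zero, `⟨c, γ⟩ · g = 0` and `(ε_l + 1) · g = 0` force `g = 0` unless the
integer factor vanishes, so (a) says that every nonzero coefficient `g_{γδε}` has `ε = 0` and
`⟨c, γ⟩ = 0` for every integer vector `c` orthogonal to all `α_j`. By duality in `ℚ^r`, the
vectors annihilated by every rational functional vanishing on the `α_j` form their span, and
clearing denominators shows that integer functionals already suffice.
-/

open Submodule

theorem mem_span_iff_forall_dotProduct_eq_zero {K ι : Type*} [Field K] [Fintype ι]
    (s : Set (ι → K)) (x : ι → K) :
    x ∈ span K s ↔ ∀ q : ι → K, (∀ v ∈ s, q ⬝ᵥ v = 0) → q ⬝ᵥ x = 0 := by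
  classical
  rw [← Subspace.forall_mem_dualAnnihilator_apply_eq_zero_iff,
    (dotProductEquiv K ι).surjective.forall]
  simp only [← SetLike.mem_coe, coe_dualAnnihilator_span]
  simp [Set.subset_def]

theorem Rat.exists_intCast_eq_smul {ι : Type*} [Finite ι] (q : ι → ℚ) :
    ∃ b : ℤ, b ≠ 0 ∧ ∃ c : ι → ℤ, Int.cast ∘ c = (b : ℚ) • q := by
  have := Fintype.ofFinite ι
  obtain ⟨b, hb⟩ := IsLocalization.exist_integer_multiples (nonZeroDivisors ℤ) Finset.univ q
  choose c hc using fun i => hb i (Finset.mem_univ i)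
  exact ⟨b, nonZeroDivisors.coe_ne_zero b, c, funext hc⟩

theorem Rat.mem_span_iff_forall_int_dotProduct_eq_zero {ι : Type*} [Fintype ι]
    (s : Set (ι → ℚ)) (x : ι → ℚ) :
    x ∈ span ℚ s ↔ ∀ c : ι → ℤ, (∀ v ∈ s, Int.cast ∘ c ⬝ᵥ v = 0) → Int.cast ∘ c ⬝ᵥ x = 0 := by
  rw [mem_span_iff_forall_dotProduct_eq_zero]
  refine ⟨fun h c hc => h _ hc, fun h q hq => ?_⟩
  obtain ⟨b, hb, c, hc⟩ := Rat.exists_intCast_eq_smul q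
  have := h c fun v hv => by rw [hc, smul_dotProduct, hq v hv, smul_zero]
  rwa [hc, smul_dotProduct, smul_eq_zero, or_iff_right (Int.cast_ne_zero.2 hb)] at this

theorem natCast_mem_span_range_iff {ι κ : Type*} [Fintype ι] (α : κ → ι → ℕ) (x : ι → ℕ) :
    (fun i => (x i : ℚ)) ∈ span ℚ (Set.range fun j i => (α j i : ℚ)) ↔
      ∀ c : ι → ℤ, (∀ j, ∑ i, c i * (α j i : ℤ) = 0) → ∑ i, c i * (x i : ℤ) = 0 := by
  simp only [Rat.mem_span_iff_forall_int_dotProduct_eq_zero, Set.forall_mem_range, dotProduct,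
    Function.comp_apply]
  exact_mod_cast Iff.rfl

theorem MvPowerSeries.pderiv_eq_zero_iff {σ R : Type*} [CommRing R] [IsAddTorsionFree R]
    (i : σ) (f : MvPowerSeries σ R) :
    pderiv R i f = 0 ↔ ∀ n, coeff n f ≠ 0 → n i = 0 := by
  classical
  have hcoeff (n : σ →₀ ℕ) : coeff n (pderiv R i f) = 0 ↔ coeff (n + .single i 1) f = 0 := by
    rw [coeff_pderiv, mul_comm, ← Nat.cast_succ, ← nsmul_eq_mul,
      nsmul_eq_zero_iff_right (n i).succ_ne_zero]
  simp only [MvPowerSeries.ext_iff, map_zero, hcoeff]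
  refine ⟨fun h n hn => by_contra fun hi => hn ?_, fun h n => ?_⟩
  · simpa [Finsupp.sub_add_single_one_cancel hi] using h (n - .single i 1)
  · by_contra hn
    simpa using h _ hn

theorem MvPowerSeries.forall_weight_mul_coeff_eq_zero_iff {σ ι κ K : Type*} [Fintype ι] [Ring K]
    [NoZeroDivisors K] [CharZero K] (u : ι → σ) (α : κ → ι → ℕ) (G : MvPowerSeries σ K) :
    (∀ c : ι → ℤ, (∀ j, ∑ i, c i * (α j i : ℤ) = 0) →
        ∀ n : σ →₀ ℕ, ((∑ i, c i * (n (u i) : ℤ) : ℤ) : K) * coeff n G = 0) ↔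
      ∀ n : σ →₀ ℕ, coeff n G ≠ 0 →
        (fun i => (n (u i) : ℚ)) ∈ span ℚ (Set.range fun j i => (α j i : ℚ)) := by
  simp only [natCast_mem_span_range_iff, mul_eq_zero, Int.cast_eq_zero]
  exact ⟨fun h n hn c hc => (h c hc n).resolve_right hn,
    fun h c hc n => or_iff_not_imp_right.2 fun hn => h n hn c hc⟩

theorem formal_algebraic_dependence_characterization_general
    {K : Type*} [Field K] [CharZero K] (p r s t : ℕ)
    (α : Fin p → Fin r → ℕ)
    (G : MvPowerSeries (Fin r ⊕ Fin s ⊕ Fin t) K) :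
    ((∀ c : Fin r → ℤ, (∀ j : Fin p, (∑ i, c i * (α j i : ℤ)) = 0) →
        ∀ σ : (Fin r ⊕ Fin s ⊕ Fin t) →₀ ℕ,
          ((∑ i, c i * (σ (Sum.inl i) : ℤ) : ℤ) : K) * MvPowerSeries.coeff σ G = 0) ∧
      (∀ l : Fin t, ∀ σ : (Fin r ⊕ Fin s ⊕ Fin t) →₀ ℕ,
        ((σ (Sum.inr (Sum.inr l)) + 1 : ℕ) : K) *
          MvPowerSeries.coeff (σ + Finsupp.single (Sum.inr (Sum.inr l)) 1) G = 0))
    ↔ (∀ σ : (Fin r ⊕ Fin s ⊕ Fin t) →₀ ℕ, MvPowerSeries.coeff σ G ≠ 0 →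
        (∀ l : Fin t, σ (Sum.inr (Sum.inr l)) = 0) ∧
        (fun i : Fin r => (σ (Sum.inl i) : ℚ)) ∈
          Submodule.span ℚ
            (Set.range fun j : Fin p => fun i : Fin r => (α j i : ℚ))) := by
  have hderiv (l : Fin t) :
      (∀ σ : (Fin r ⊕ Fin s ⊕ Fin t) →₀ ℕ, ((σ (Sum.inr (Sum.inr l)) + 1 : ℕ) : K) *
          MvPowerSeries.coeff (σ + Finsupp.single (Sum.inr (Sum.inr l)) 1) G = 0) ↔
        ∀ σ, MvPowerSeries.coeff σ G ≠ 0 → σ (Sum.inr (Sum.inr l)) = 0 := by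
    rw [← MvPowerSeries.pderiv_eq_zero_iff, MvPowerSeries.ext_iff]
    simp only [MvPowerSeries.coeff_pderiv, map_zero, Nat.cast_succ, mul_comm]
  rw [MvPowerSeries.forall_weight_mul_coeff_eq_zero_iff Sum.inl]
  simp only [hderiv]
  exact ⟨fun ⟨hspan, hw⟩ σ hσ => ⟨fun l => hw l σ hσ, hspan σ hσ⟩,
    fun h => ⟨fun σ hσ => (h σ hσ).2, fun l σ hσ => (h σ hσ).1 l⟩⟩

/-- Characterization of formal algebraic dependence on a monomial morphism: a formal power
series `G ∈ K⟦u,v,w⟧` is annihilated by all the operators `X_c` (for `c ∈ ℤ^r` orthogonal to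
the exponents `α_1,…,α_p`) and by all `∂/∂w_l` if and only if its coefficients `g_{γδε}`
vanish for `ε ≠ 0` and the remaining nonzero coefficients have `u`-exponent `γ` in the
`ℚ`-linear span of `α_1,…,α_p`. -/
theorem formal_algebraic_dependence_characterization
    {K : Type*} [Field K] [CharZero K] (p r s t : ℕ)
    (α : Fin p → Fin r → ℕ)
    (hα : LinearIndependent ℚ fun j : Fin p => fun i : Fin r => (α j i : ℚ))
    (G : MvPowerSeries (Fin r ⊕ Fin s ⊕ Fin t) K) :
    ((∀ c : Fin r → ℤ, (∀ j : Fin p, (∑ i, c i * (α j i : ℤ)) = 0) →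
        ∀ σ : (Fin r ⊕ Fin s ⊕ Fin t) →₀ ℕ,
          ((∑ i, c i * (σ (Sum.inl i) : ℤ) : ℤ) : K) * MvPowerSeries.coeff σ G = 0) ∧
      (∀ l : Fin t, ∀ σ : (Fin r ⊕ Fin s ⊕ Fin t) →₀ ℕ,
        ((σ (Sum.inr (Sum.inr l)) + 1 : ℕ) : K) *
          MvPowerSeries.coeff (σ + Finsupp.single (Sum.inr (Sum.inr l)) 1) G = 0))
    ↔ (∀ σ : (Fin r ⊕ Fin s ⊕ Fin t) →₀ ℕ, MvPowerSeries.coeff σ G ≠ 0 →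
        (∀ l : Fin t, σ (Sum.inr (Sum.inr l)) = 0) ∧
        (fun i : Fin r => (σ (Sum.inl i) : ℚ)) ∈
          Submodule.span ℚ
            (Set.range fun j : Fin p => fun i : Fin r => (α j i : ℚ))) :=
  formal_algebraic_dependence_characterization_general p r s t α G
end

section
/- Let K be a field, let d be a positive integer, and let ε ∈ K be a primitive d-th root of unity. Let H ∈ K⟦X⟧ be a formal power series in one variable, and for each i let H(ε^i·X) denote the rescaled series whose m-th coefficient is ε^{i·m} times the m-th coefficient of H. Consider the polynomial P(t) = ∏_{i=1}^{d} (t − H(ε^i·X)) with coefficients in K⟦X⟧. Then every coefficient a_j ∈ K⟦X⟧ of P (as a polynomial in t) is a power series in X^d; i.e., the m-th coefficient of a_j vanishes whenever d does not divide m. -/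
/-!
Substituting `ε X` for `X` sends `H(ε^i X)` to `H(ε^(i+1) X)`; as `ε^d = 1` this permutes the
factors of `P` cyclically, so `P` and each of its coefficients `a_j` are fixed. The substitution
multiplies the `m`-th coefficient of `a_j` by `ε^m`, which differs from `1` when `d ∤ m`.
-/

theorem Finset.prod_range_shift_eq_of_eq {M : Type*} [CommMonoid M] (f : ℕ → M) (n : ℕ)
    (hf : f n = f 0) : ∏ i ∈ range n, f (i + 1) = ∏ i ∈ range n, f i := by
  cases n with
  | zero => rfl
  | succ n => rw [prod_range_succ, hf, ← prod_range_succ']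

theorem PowerSeries.coeff_eq_zero_of_rescale_eq_self {R : Type*} [CommSemiring R]
    [IsRightCancelMulZero R] {a : R} {f : PowerSeries R} (hf : rescale a f = f) {m : ℕ}
    (ha : a ^ m ≠ 1) : coeff m f = 0 := by
  by_contra h
  exact ha ((mul_eq_right₀ h).1 (by rw [← coeff_rescale, hf]))

theorem Polynomial.map_rescale_prod_X_sub_C_rescale {R : Type*} [CommRing R] {ε : R} {d : ℕ}
    (hεd : ε ^ d = 1) (H : PowerSeries R) :
    (∏ i ∈ Finset.range d, (X - C (PowerSeries.rescale (ε ^ (i + 1)) H))).map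
        (PowerSeries.rescale ε) =
      ∏ i ∈ Finset.range d, (X - C (PowerSeries.rescale (ε ^ (i + 1)) H)) := by
  simp only [Polynomial.map_prod, Polynomial.map_sub, map_X, map_C,
    PowerSeries.rescale_rescale, ← pow_succ]
  exact Finset.prod_range_shift_eq_of_eq (fun i ↦ X - C (PowerSeries.rescale (ε ^ (i + 1)) H))
    d (by simp [pow_succ, hεd])

/-- Let `ε` be a primitive `d`-th root of unity in a field `K` and `H ∈ K⟦X⟧`. Then every
coefficient (as a polynomial in `t`) of `P(t) = ∏_{i=1}^d (t − H(ε^i X))` is a power series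
in `X^d`: its `m`-th coefficient vanishes whenever `d ∤ m`. -/
theorem symm_product_coeffs_powerSeries_in_Xd {K : Type*} [Field K]
    (d : ℕ) (hd : 0 < d) (ε : K)
    (hεd : ε ^ d = 1) (hεprim : ∀ m : ℕ, 1 ≤ m → m < d → ε ^ m ≠ 1)
    (H : PowerSeries K) :
    ∀ j m : ℕ, ¬ d ∣ m →
      PowerSeries.coeff m
        ((∏ i ∈ Finset.range d,
          (Polynomial.X - Polynomial.C (PowerSeries.rescale (ε ^ (i + 1)) H))).coeff j)
        = 0 := by
  intro j m hm
  have hprim : IsPrimitiveRoot ε d := .mk_of_lt ε hd hεd hεprim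
  refine PowerSeries.coeff_eq_zero_of_rescale_eq_self ?_ (mt (hprim.pow_eq_one_iff_dvd m).1 hm)
  rw [← Polynomial.coeff_map, Polynomial.map_rescale_prod_X_sub_C_rescale hεd]
end

section
/- Let p < r and let α_1, …, α_p ∈ ℕ^r be linearly independent over ℚ. For every a ∈ (0,∞)^r, the fibre F = {u ∈ (0,∞)^r : u^{α_j} = a^{α_j} for all j = 1, …, p} of the positive monomial map through a is connected and unbounded (and contains a). -/
/-!
Taking logarithms centred at `a`, i.e. writing `u i = a i * exp (v i)`, turns the fibre into the
image of the kernel of the exponent matrix `(α j i)` under a homeomorphism onto the positive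
orthant. That kernel is a subspace, hence connected, and it is nonzero because `p < r`; moving
along a line in it pushes some coordinate of `u` to infinity.
-/

open Real

namespace MonomialFibre

variable {ι κ : Type*}

noncomputable def scaledExp (a v : ι → ℝ) : ι → ℝ := fun i => a i * exp (v i)

lemma continuous_scaledExp (a : ι → ℝ) : Continuous (scaledExp a) := by
  unfold scaledExp; fun_prop

lemma scaledExp_log_sub_log {a u : ι → ℝ} (ha : ∀ i, 0 < a i) (hu : ∀ i, 0 < u i) :
    scaledExp a (fun i => log (u i) - log (a i)) = u := by
  funext i
  simp only [scaledExp, exp_sub, exp_log (hu i), exp_log (ha i)]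
  field_simp [(ha i).ne']

variable [Fintype ι] (α : κ → ι → ℕ)

def logMonomialMap : (ι → ℝ) →ₗ[ℝ] (κ → ℝ) :=
  (Matrix.of fun j i => (α j i : ℝ)).mulVecLin

def fibre (a : ι → ℝ) : Set (ι → ℝ) :=
  {u | (∀ i, 0 < u i) ∧ ∀ j, (∏ i, u i ^ α j i) = ∏ i, a i ^ α j i}

variable {α}

lemma logMonomialMap_apply (v : ι → ℝ) (j : κ) :
    logMonomialMap α v j = ∑ i, (α j i : ℝ) * v i := by
  simp [logMonomialMap, Matrix.mulVec, dotProduct]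

lemma prod_scaledExp_pow (a v : ι → ℝ) (j : κ) :
    ∏ i, scaledExp a v i ^ α j i = (∏ i, a i ^ α j i) * exp (logMonomialMap α v j) := by
  simp only [scaledExp, mul_pow, Finset.prod_mul_distrib, logMonomialMap_apply, exp_sum,
    exp_nat_mul]

lemma fibre_eq_image_ker {a : ι → ℝ} (ha : ∀ i, 0 < a i) :
    fibre α a = scaledExp a '' (LinearMap.ker (logMonomialMap α) : Set (ι → ℝ)) := by
  ext u
  constructor
  · rintro ⟨hu, hprod_eq⟩
    refine ⟨fun i => log (u i) - log (a i), ?_, scaledExp_log_sub_log ha hu⟩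
    rw [SetLike.mem_coe, LinearMap.mem_ker]
    funext j
    have hprod_pos : 0 < ∏ i, a i ^ α j i := Finset.prod_pos fun i _ => pow_pos (ha i) _
    have h := prod_scaledExp_pow (α := α) a (fun i => log (u i) - log (a i)) j
    rw [scaledExp_log_sub_log ha hu, hprod_eq j] at h
    simpa [hprod_pos.ne'] using h
  · rintro ⟨v, hv, rfl⟩
    refine ⟨fun i => mul_pos (ha i) (exp_pos _), fun j => ?_⟩
    rw [prod_scaledExp_pow, LinearMap.mem_ker.mp hv]
    simp

lemma isConnected_fibre {a : ι → ℝ} (ha : ∀ i, 0 < a i) : IsConnected (fibre α a) := by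
  rw [fibre_eq_image_ker ha]
  exact ((Submodule.convex _).isConnected ⟨0, Submodule.zero_mem _⟩).image _
    (continuous_scaledExp a).continuousOn

lemma not_isBounded_image_scaledExp {K : Submodule ℝ (ι → ℝ)} (hK : K ≠ ⊥) {a : ι → ℝ}
    (ha : ∀ i, 0 < a i) : ¬ Bornology.IsBounded (scaledExp a '' (K : Set (ι → ℝ))) := by
  obtain ⟨w, hwK, hw⟩ := (Submodule.ne_bot_iff K).mp hK
  obtain ⟨i₀, hi₀⟩ : ∃ i₀, w i₀ ≠ 0 := Function.ne_iff.mp hw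
  -- Scaling `w` by `s * w i₀` rather than `s` makes coordinate `i₀` grow whatever its sign.
  have hcoord : ∀ s : ℝ, scaledExp a ((s * w i₀) • w) i₀ = a i₀ * exp (s * w i₀ ^ 2) :=
    fun s => by simp only [scaledExp, Pi.smul_apply, smul_eq_mul]; ring_nf
  have htendsto : Filter.Tendsto (fun s : ℝ => a i₀ * exp (s * w i₀ ^ 2))
      Filter.atTop Filter.atTop :=
    (tendsto_exp_atTop.comp (Filter.tendsto_id.atTop_mul_const (by positivity))).const_mul_atTop
      (ha i₀)
  intro hbdd
  obtain ⟨C, hC⟩ := isBounded_iff_forall_norm_le.mp hbdd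
  obtain ⟨s, hs⟩ := (htendsto.eventually_gt_atTop C).exists
  have hle := (norm_le_pi_norm _ i₀).trans (hC _ ⟨_, K.smul_mem (s * w i₀) hwK, rfl⟩)
  rw [hcoord, Real.norm_eq_abs] at hle
  exact (hs.trans_le ((le_abs_self _).trans hle)).false

end MonomialFibre

open MonomialFibre in
theorem monomial_fibre_connected_unbounded_general (p r : ℕ) (hpr : p < r)
    (α : Fin p → Fin r → ℕ)
    (a : Fin r → ℝ) (ha : ∀ i, 0 < a i) :
    a ∈ {u : Fin r → ℝ | (∀ i, 0 < u i) ∧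
        ∀ j : Fin p, (∏ i, u i ^ α j i) = ∏ i, a i ^ α j i} ∧
    IsConnected {u : Fin r → ℝ | (∀ i, 0 < u i) ∧
        ∀ j : Fin p, (∏ i, u i ^ α j i) = ∏ i, a i ^ α j i} ∧
    ¬ Bornology.IsBounded {u : Fin r → ℝ | (∀ i, 0 < u i) ∧
        ∀ j : Fin p, (∏ i, u i ^ α j i) = ∏ i, a i ^ α j i} := by
  have hker : LinearMap.ker (logMonomialMap α) ≠ ⊥ :=
    LinearMap.ker_ne_bot_of_finrank_lt (by simpa using hpr)
  refine ⟨⟨ha, fun _ => rfl⟩, isConnected_fibre ha, ?_⟩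
  change ¬ Bornology.IsBounded (fibre α a)
  rw [fibre_eq_image_ker ha]
  exact not_isBounded_image_scaledExp hker ha

/-- The fibre through `a ∈ (0,∞)^r` of the positive monomial map `u ↦ (u^{α_1},…,u^{α_p})`,
with `p < r` and `α_1,…,α_p` linearly independent over `ℚ`, contains `a`, is connected,
and is unbounded. -/
theorem monomial_fibre_connected_unbounded (p r : ℕ) (hpr : p < r)
    (α : Fin p → Fin r → ℕ)
    (hα : LinearIndependent ℚ fun j : Fin p => fun i : Fin r => (α j i : ℚ))
    (a : Fin r → ℝ) (ha : ∀ i, 0 < a i) :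
    a ∈ {u : Fin r → ℝ | (∀ i, 0 < u i) ∧
        ∀ j : Fin p, (∏ i, u i ^ α j i) = ∏ i, a i ^ α j i} ∧
    IsConnected {u : Fin r → ℝ | (∀ i, 0 < u i) ∧
        ∀ j : Fin p, (∏ i, u i ^ α j i) = ∏ i, a i ^ α j i} ∧
    ¬ Bornology.IsBounded {u : Fin r → ℝ | (∀ i, 0 < u i) ∧
        ∀ j : Fin p, (∏ i, u i ^ α j i) = ∏ i, a i ^ α j i} :=
  monomial_fibre_connected_unbounded_general p r hpr α a ha
end

section
/- Let p < r, let α_1, …, α_p ∈ ℕ^r be linearly independent over ℚ, and let a ∈ (0,1)^r. Then there exists u ∈ (0,1]^r such that u_i = 1 for some index i and u^{α_j} = a^{α_j} for every j = 1, …, p. (Every fibre of the positive monomial map through a point of the open unit cube meets the boundary of the cube within the open positive orthant.) -/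
/-! Pass to logarithmic coordinates `x = log a`, in which the fibre through `a` is the affine
subspace `x + ker A` of the exponent matrix `A`, and the open cube is the open negative orthant.
Since `A` has fewer rows than columns its kernel contains some `w ≠ 0`, and moving from `x` along
the line `x + t • w` until the first coordinate reaches `0` gives a point of the fibre in the
closed negative orthant with a vanishing coordinate; exponentiating gives `u`. -/

open Finset Matrix

theorem Matrix.exists_mulVec_eq_zero_of_card_lt {K m n : Type*} [Field K] [Fintype m]
    [Fintype n] (A : Matrix m n K) (h : Fintype.card m < Fintype.card n) :
    ∃ v ≠ 0, A *ᵥ v = 0 := by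
  obtain ⟨v, hv, hv0⟩ := Submodule.exists_mem_ne_zero_of_ne_bot
    (A.mulVecLin.ker_ne_bot_of_finrank_lt (by simpa using h))
  exact ⟨v, hv0, hv⟩

section LineToBoundary

variable {ι : Type*} [Fintype ι] {x w : ι → ℝ}

theorem exists_add_smul_nonpos_and_eq_zero_of_pos (hx : ∀ i, x i < 0) {i₁ : ι}
    (hi₁ : 0 < w i₁) : ∃ t : ℝ, x + t • w ≤ 0 ∧ ∃ i, (x + t • w) i = 0 := by
  have hnx : ∀ i, 0 < -x i := fun i => neg_pos.2 (hx i)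
  obtain ⟨i₀, -, hmax⟩ := univ.exists_max_image (fun i => w i / -x i) ⟨i₁, mem_univ _⟩
  have hm : 0 < w i₀ / -x i₀ := (div_pos hi₁ (hnx i₁)).trans_le (hmax i₁ (mem_univ _))
  have hwi₀ : 0 < w i₀ := by simpa [div_pos_iff_of_pos_right (hnx i₀)] using hm
  -- `t` is the first time at which some coordinate of `x + t • w` reaches `0`
  refine ⟨-x i₀ / w i₀, fun i => ?_, i₀, ?_⟩
  · have hi : w i / -x i ≤ w i₀ / -x i₀ := hmax i (mem_univ _)
    rw [div_le_div_iff₀ (hnx i) (hnx i₀)] at hi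
    have : -x i₀ / w i₀ * w i ≤ -x i := by
      rw [div_mul_eq_mul_div, div_le_iff₀ hwi₀]
      linarith
    simp only [Pi.add_apply, Pi.smul_apply, smul_eq_mul, Pi.zero_apply]
    linarith
  · simp only [Pi.add_apply, Pi.smul_apply, smul_eq_mul, div_mul_cancel₀ _ hwi₀.ne']
    ring

theorem exists_add_smul_nonpos_and_eq_zero (hx : ∀ i, x i < 0) (hw : w ≠ 0) :
    ∃ t : ℝ, x + t • w ≤ 0 ∧ ∃ i, (x + t • w) i = 0 := by
  obtain ⟨i₁, hi₁⟩ := Function.ne_iff.mp hw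
  rcases (show w i₁ ≠ 0 from hi₁).lt_or_gt with hneg | hpos
  · obtain ⟨t, hle, hzero⟩ :=
      exists_add_smul_nonpos_and_eq_zero_of_pos hx (w := -w) (i₁ := i₁) (by simpa using hneg)
    exact ⟨-t, by simpa using hle, by simpa using hzero⟩
  · exact exists_add_smul_nonpos_and_eq_zero_of_pos hx hpos

end LineToBoundary

theorem Real.prod_exp_pow_eq_exp_dotProduct {ι : Type*} [Fintype ι] (n : ι → ℕ) (y : ι → ℝ) :
    ∏ i, Real.exp (y i) ^ n i = Real.exp ((fun i => (n i : ℝ)) ⬝ᵥ y) := by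
  simp only [dotProduct, Real.exp_sum, Real.exp_nat_mul]

theorem monomial_fibre_meets_cube_boundary_general (p r : ℕ) (hpr : p < r)
    (α : Fin p → Fin r → ℕ)
    (a : Fin r → ℝ) (ha : ∀ i, 0 < a i ∧ a i < 1) :
    ∃ u : Fin r → ℝ, (∀ i, 0 < u i ∧ u i ≤ 1) ∧ (∃ i, u i = 1) ∧
      ∀ j : Fin p, (∏ i, u i ^ α j i) = ∏ i, a i ^ α j i := by
  set A : Matrix (Fin p) (Fin r) ℝ := of fun j i => (α j i : ℝ)
  set x : Fin r → ℝ := fun i => Real.log (a i)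
  obtain ⟨w, hw0, hw⟩ := A.exists_mulVec_eq_zero_of_card_lt (by simpa using hpr)
  obtain ⟨t, hle, i₀, hi₀⟩ :=
    exists_add_smul_nonpos_and_eq_zero (fun i => Real.log_neg (ha i).1 (ha i).2) hw0
  have hfibre : A *ᵥ (x + t • w) = A *ᵥ x := by
    rw [mulVec_add, mulVec_smul, hw, smul_zero, add_zero]
  have hax : a = fun i => Real.exp (x i) := funext fun i => (Real.exp_log (ha i).1).symm
  refine ⟨fun i => Real.exp ((x + t • w) i),
    fun i => ⟨Real.exp_pos _, Real.exp_le_one_iff.2 (hle i)⟩, ⟨i₀, Real.exp_eq_one_iff _ |>.2 hi₀⟩,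
    fun j => ?_⟩
  rw [Real.prod_exp_pow_eq_exp_dotProduct, hax, Real.prod_exp_pow_eq_exp_dotProduct]
  exact congrArg Real.exp (congrFun hfibre j)

/-- Every fibre of the positive monomial map through a point of the open unit cube meets the
boundary of the cube within the open positive orthant: for `p < r`, `α_1,…,α_p ∈ ℕ^r`
linearly independent over `ℚ`, and `a ∈ (0,1)^r`, there is `u ∈ (0,1]^r` with some `u_i = 1`
and `u^{α_j} = a^{α_j}` for all `j`. -/
theorem monomial_fibre_meets_cube_boundary (p r : ℕ) (hpr : p < r)
    (α : Fin p → Fin r → ℕ)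
    (hα : LinearIndependent ℚ fun j : Fin p => fun i : Fin r => (α j i : ℚ))
    (a : Fin r → ℝ) (ha : ∀ i, 0 < a i ∧ a i < 1) :
    ∃ u : Fin r → ℝ, (∀ i, 0 < u i ∧ u i ≤ 1) ∧ (∃ i, u i = 1) ∧
      ∀ j : Fin p, (∏ i, u i ^ α j i) = ∏ i, a i ^ α j i :=
  monomial_fibre_meets_cube_boundary_general p r hpr α a ha
end

section
/- Let p ≤ r, s ∈ ℕ, and let α_1, …, α_p ∈ ℕ^r be linearly independent over ℚ. Define Φ : ℝ^r × ℝ^s → ℝ^p × ℝ^s by Φ(u, v) = ((u^{α_1}, …, u^{α_p}), v). Call a pair (T, ε), where T is a subset of {1, …, r} with exactly r − p elements and ε : T → {−1, 1}, admissible if the restrictions of α_1, …, α_p to the coordinates outside T are linearly independent over ℚ. Then the image of the closed cube satisfies: Φ([−1,1]^{r+s}) = ⋃_{(T,ε) admissible} Φ({(u, v) ∈ [−1,1]^{r+s} : u_i = ε(i) for all i ∈ T}). (Image of a real monomial mapping: the image of the cube is covered by the images of the faces obtained by setting r − p of the u-coordinates equal to ±1, subject to the generic-rank condition.) -/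
/-!
Among the points of `[-1,1]^r` with prescribed monomial values `u^{α_j}`, take one maximizing
`∑ |u_i|` (the fiber is compact). Its free coordinates `{i | |u_i| < 1}` carry linearly
independent columns of `α`: a relation `c` among them would let us either rescale
`u_i ↦ u_i e^{±t c_i}`, which preserves every monomial and strictly increases `∑ |u_i|` for one
sign of `t` (as `cosh > 1`), or, if `u` vanishes on the support of `c`, raise one such zero
coordinate to `1`. Extending the free columns to a basis of `ℚ^p` gives `p` columns whose
square submatrix is invertible; the remaining `r - p` coordinates are `±1`.
-/

open Finset Filter Topology Real

namespace Matrix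

variable {ι κ K : Type*} [Field K] [Fintype ι] [Fintype κ]

theorem linearIndependent_row_of_col (A : Matrix ι κ K) (h : LinearIndependent K A.col)
    (hcard : Fintype.card κ = Fintype.card ι) : LinearIndependent K A.row := by
  rw [linearIndependent_iff_card_eq_finrank_span, Set.finrank, ← rank_eq_finrank_span_row,
    ← rank_transpose, ← hcard]
  exact (LinearIndependent.rank_matrix (M := Aᵀ) h).symm

theorem exists_finset_linearIndependent_row_restrict_compl (A : Matrix ι κ K)
    (hA : LinearIndependent K A.row) {s : Set κ} (hs : LinearIndepOn K A.col s) :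
    ∃ T : Finset κ, T.card = Fintype.card κ - Fintype.card ι ∧ (∀ i ∈ T, i ∉ s) ∧
      LinearIndependent K fun j (i : {i // i ∉ T}) => A j i := by
  classical
  obtain ⟨b, -, hsb, hspan, hb⟩ := exists_linearIndepOn_extension hs (Set.subset_univ s)
  obtain ⟨T, rfl⟩ : ∃ T : Finset κ, (↑T)ᶜ = b := ⟨b.toFinsetᶜ, by simp⟩
  have hcard : Fintype.card {i // i ∉ T} = Fintype.card ι := by
    have hspan_eq : Submodule.span K (A.col '' (↑T)ᶜ) = Submodule.span K (Set.range A.col) :=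
      le_antisymm (Submodule.span_mono (Set.image_subset_range _ _))
        (Submodule.span_le.2 (by simpa using hspan))
    calc Fintype.card {i // i ∉ T} = Fintype.card ((↑T)ᶜ : Set κ) := Fintype.card_congr (.refl _)
      _ = Fintype.card ι := by
        rw [← finrank_span_eq_card hb, ← Set.image_eq_range, hspan_eq,
          ← rank_eq_finrank_span_cols, hA.rank_matrix]
  refine ⟨T, ?_, fun i hiT his => ?_, ?_⟩
  · rw [Fintype.card_subtype_compl, Fintype.card_coe] at hcard
    have := T.card_le_univ
    omega
  · exact hsb his hiT
  · exact linearIndependent_row_of_col (A.submatrix id Subtype.val) hb hcard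

end Matrix

section CubeFiber

variable {ι κ : Type*} [Fintype κ] (α : ι → κ → ℕ)

def cubeFiber (y : ι → ℝ) : Set (κ → ℝ) :=
  {w | (∀ i, |w i| ≤ 1) ∧ ∀ j, ∏ i, w i ^ α j i = y j}

theorem isCompact_cubeFiber (y : ι → ℝ) : IsCompact (cubeFiber α y) := by
  refine (isCompact_univ_pi fun _ => isCompact_Icc (a := (-1 : ℝ)) (b := 1)).of_isClosed_subset
    ?_ fun w hw i _ => abs_le.1 (hw.1 i)
  simp only [cubeFiber, Set.ofPred_and, Set.ofPred_forall]
  exact (isClosed_iInter fun i => isClosed_le (by fun_prop) continuous_const).inter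
    (isClosed_iInter fun j => isClosed_eq (by fun_prop) continuous_const)

variable {α}

theorem prod_mul_exp_pow_eq {c : κ → ℝ} (hc : ∀ j, ∑ i, c i * α j i = 0) (w : κ → ℝ) (t : ℝ)
    (j : ι) : ∏ i, (w i * exp (t * c i)) ^ α j i = ∏ i, w i ^ α j i := by
  have hexp : ∏ i, exp (t * c i) ^ α j i = 1 := by
    simp_rw [← exp_nat_mul, ← exp_sum, ← mul_assoc, mul_comm _ t, mul_assoc, ← mul_sum,
      mul_comm (α j _ : ℝ), hc j, mul_zero, exp_zero]
  simp_rw [mul_pow, prod_mul_distrib, hexp, mul_one]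

theorem prod_update_pow_eq [DecidableEq κ] {c : κ → ℝ} (hc : ∀ j, ∑ i, c i * α j i = 0)
    {w : κ → ℝ} (hw : ∀ i, c i ≠ 0 → w i = 0) {i₀ : κ} (hi₀ : c i₀ ≠ 0) (x : ℝ) (j : ι) :
    ∏ i, Function.update w i₀ x i ^ α j i = ∏ i, w i ^ α j i := by
  rw [Fintype.prod_eq_mul_prod_compl i₀, Fintype.prod_eq_mul_prod_compl i₀ (fun i => w i ^ _),
    Function.update_self, hw i₀ hi₀]
  have hrest : ∏ i ∈ {i₀}ᶜ, Function.update w i₀ x i ^ α j i = ∏ i ∈ {i₀}ᶜ, w i ^ α j i :=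
    prod_congr rfl fun i hi => by rw [Function.update_of_ne (by simpa using hi)]
  rw [hrest]
  rcases Nat.eq_zero_or_pos (α j i₀) with h0 | hpos
  · simp [h0]
  -- the relation forces a second zero coordinate, which kills the monomial
  obtain ⟨i₂, hi₂, hne⟩ : ∃ i ∈ ({i₀}ᶜ : Finset κ), c i * α j i ≠ 0 := by
    refine exists_ne_zero_of_sum_ne_zero ?_
    have := hc j
    rw [Fintype.sum_eq_add_sum_compl i₀] at this
    rw [eq_neg_of_add_eq_zero_right this, neg_ne_zero]
    exact mul_ne_zero hi₀ (by exact_mod_cast hpos.ne')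
  have hα₂ : α j i₂ ≠ 0 := by exact_mod_cast right_ne_zero_of_mul hne
  rw [prod_eq_zero hi₂ (by rw [hw i₂ (left_ne_zero_of_mul hne), zero_pow hα₂]), mul_zero, mul_zero]

theorem two_mul_sum_abs_lt_sum_abs_mul_exp {w c : κ → ℝ} {t : ℝ} (ht : t ≠ 0) {i₁ : κ}
    (hc : c i₁ ≠ 0) (hw : w i₁ ≠ 0) :
    2 * ∑ i, |w i| < ∑ i, |w i * exp (t * c i)| + ∑ i, |w i * exp (-t * c i)| := by
  have hcosh (i : κ) :
      |w i * exp (t * c i)| + |w i * exp (-t * c i)| = 2 * |w i| * cosh (t * c i) := by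
    rw [abs_mul, abs_mul, abs_exp, abs_exp, cosh_eq, neg_mul]
    ring
  rw [mul_sum, ← sum_add_distrib]
  refine sum_lt_sum (fun i _ => ?_) ⟨i₁, mem_univ _, ?_⟩ <;> rw [hcosh]
  · exact le_mul_of_one_le_right (by positivity) (one_le_cosh _)
  · exact lt_mul_of_one_lt_right (by positivity) (one_lt_cosh.2 (mul_ne_zero ht hc))

theorem exists_ne_zero_mul_exp_mem_cubeFiber {y : ι → ℝ} {u : κ → ℝ} (hu : u ∈ cubeFiber α y)
    {c : κ → ℝ} (hc : ∀ j, ∑ i, c i * α j i = 0) (hsupp : ∀ i, c i ≠ 0 → |u i| < 1) :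
    ∃ t ≠ 0, (fun i => u i * exp (t * c i)) ∈ cubeFiber α y ∧
      (fun i => u i * exp (-t * c i)) ∈ cubeFiber α y := by
  have hcube : ∀ᶠ t in 𝓝 (0 : ℝ), ∀ i, |u i * exp (t * c i)| ≤ 1 := by
    refine eventually_all.2 fun i => ?_
    by_cases hci : c i = 0
    · exact Eventually.of_forall fun t => by simpa [hci] using hu.1 i
    have hlim : Tendsto (fun t => |u i * exp (t * c i)|) (𝓝 0) (𝓝 |u i|) := by
      simpa using ((by fun_prop : Continuous fun t => |u i * exp (t * c i)|).tendsto 0)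
    exact (hlim.eventually_lt_const (hsupp i hci)).mono fun t => le_of_lt
  have hcube_neg := (continuous_neg.tendsto' (0 : ℝ) 0 neg_zero).eventually hcube
  obtain ⟨t, ⟨hplus, hminus⟩, ht⟩ :=
    (((hcube.and hcube_neg).filter_mono nhdsWithin_le_nhds).and
      (self_mem_nhdsWithin : {t : ℝ | t ≠ 0} ∈ 𝓝[≠] 0)).exists
  exact ⟨t, ht, ⟨hplus, fun j => (prod_mul_exp_pow_eq hc u t j).trans (hu.2 j)⟩,
    ⟨hminus, fun j => (prod_mul_exp_pow_eq hc u (-t) j).trans (hu.2 j)⟩⟩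

theorem eq_zero_of_isMaxOn_cubeFiber {y : ι → ℝ} {u : κ → ℝ} (hu : u ∈ cubeFiber α y)
    (hmax : IsMaxOn (fun w => ∑ i, |w i|) (cubeFiber α y) u) {c : κ → ℝ}
    (hc : ∀ j, ∑ i, c i * α j i = 0) (hsupp : ∀ i, c i ≠ 0 → |u i| < 1) : c = 0 := by
  classical
  by_contra hne
  obtain ⟨i₀, hi₀⟩ := Function.ne_iff.1 hne
  by_cases hzero : ∀ i, c i ≠ 0 → u i = 0
  · have hmem : Function.update u i₀ 1 ∈ cubeFiber α y := by
      refine ⟨fun i => ?_, fun j => (prod_update_pow_eq hc hzero hi₀ 1 j).trans (hu.2 j)⟩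
      rcases eq_or_ne i i₀ with rfl | hi
      · simp
      · simpa [hi] using hu.1 i
    have hlt : ∑ i, |u i| < ∑ i, |Function.update u i₀ 1 i| := by
      refine sum_lt_sum (fun i _ => ?_) ⟨i₀, mem_univ _, by simp [hzero i₀ hi₀]⟩
      rcases eq_or_ne i i₀ with rfl | hi
      · simpa using hu.1 i
      · simp [hi]
    exact (isMaxOn_iff.1 hmax _ hmem).not_gt hlt
  · push Not at hzero
    obtain ⟨i₁, hci₁, hui₁⟩ := hzero
    obtain ⟨t, ht, hplus, hminus⟩ := exists_ne_zero_mul_exp_mem_cubeFiber hu hc hsupp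
    linarith [two_mul_sum_abs_lt_sum_abs_mul_exp ht hci₁ hui₁, isMaxOn_iff.1 hmax _ hplus,
      isMaxOn_iff.1 hmax _ hminus]

theorem exists_mem_cubeFiber_linearIndepOn {y : ι → ℝ} {u : κ → ℝ} (hu : u ∈ cubeFiber α y) :
    ∃ u₀ ∈ cubeFiber α y, LinearIndepOn ℚ (fun i j => (α j i : ℚ)) {i | |u₀ i| < 1} := by
  obtain ⟨u₀, hu₀, hmax⟩ := (isCompact_cubeFiber α y).exists_isMaxOn ⟨u, hu⟩
    (by fun_prop : Continuous fun w : κ → ℝ => ∑ i, |w i|).continuousOn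
  refine ⟨u₀, hu₀, linearIndepOn_iff.2 fun l hl hl0 => ?_⟩
  have hrel : ∀ j, ∑ i, (l i : ℝ) * α j i = 0 := fun j => by
    have := congrFun hl0 j
    rw [Finsupp.linearCombination_apply, Finsupp.sum_fintype _ _ (by simp)] at this
    simp only [Finset.sum_apply, Pi.smul_apply, smul_eq_mul, Pi.zero_apply] at this
    exact_mod_cast this
  have hl0 := eq_zero_of_isMaxOn_cubeFiber hu₀ hmax hrel fun i hi =>
    hl (Finsupp.mem_support_iff.2 (by exact_mod_cast hi))
  ext i
  simpa using congrFun hl0 i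

end CubeFiber

theorem monomial_image_of_cube_general (p r s : ℕ)
    (α : Fin p → Fin r → ℕ)
    (hα : LinearIndependent ℚ fun j : Fin p => fun i : Fin r => (α j i : ℚ)) :
    (fun q : (Fin r → ℝ) × (Fin s → ℝ) =>
        ((fun j : Fin p => ∏ i, q.1 i ^ α j i), q.2)) ''
      {q : (Fin r → ℝ) × (Fin s → ℝ) | (∀ i, |q.1 i| ≤ 1) ∧ ∀ k, |q.2 k| ≤ 1}
    = ⋃ (T : Finset (Fin r)) (ε : Fin r → ℝ)
        (_ : T.card = r - p ∧ (∀ i ∈ T, ε i = 1 ∨ ε i = -1) ∧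
          LinearIndependent ℚ
            fun j : Fin p => fun i : {i : Fin r // i ∉ T} => (α j i.1 : ℚ)),
        (fun q : (Fin r → ℝ) × (Fin s → ℝ) =>
            ((fun j : Fin p => ∏ i, q.1 i ^ α j i), q.2)) ''
          ({q : (Fin r → ℝ) × (Fin s → ℝ) | (∀ i, |q.1 i| ≤ 1) ∧ ∀ k, |q.2 k| ≤ 1} ∩
            {q : (Fin r → ℝ) × (Fin s → ℝ) | ∀ i ∈ T, q.1 i = ε i}) := by
  refine Set.Subset.antisymm ?_ (Set.iUnion₂_subset fun T ε =>
    Set.iUnion_subset fun _ => Set.image_mono Set.inter_subset_left)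
  rintro _ ⟨⟨u, v⟩, ⟨hu, hv⟩, rfl⟩
  obtain ⟨u₀, ⟨hu₀, hmono⟩, hfree⟩ :=
    exists_mem_cubeFiber_linearIndepOn (α := α) (u := u) ⟨hu, fun _ => rfl⟩
  obtain ⟨T, hT, hTfree, hli⟩ :=
    Matrix.exists_finset_linearIndependent_row_restrict_compl (fun j i => (α j i : ℚ)) hα hfree
  have hsign : ∀ i ∈ T, u₀ i = 1 ∨ u₀ i = -1 := fun i hi =>
    (abs_eq zero_le_one).1 ((hu₀ i).antisymm (not_lt.1 (hTfree i hi)))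
  simp only [Set.mem_iUnion]
  exact ⟨T, u₀, ⟨by simpa using hT, hsign, hli⟩, (u₀, v), ⟨⟨hu₀, hv⟩, fun _ _ => rfl⟩,
    Prod.ext (funext hmono) rfl⟩

/-- Image of a real monomial mapping: the image of the closed cube under
`Φ(u,v) = ((u^{α_1},…,u^{α_p}), v)` is covered by the images of the faces obtained by
setting `r − p` of the `u`-coordinates equal to `±1`, subject to the condition that the
restrictions of `α_1,…,α_p` to the remaining coordinates stay linearly independent over
`ℚ`. -/
theorem monomial_image_of_cube (p r s : ℕ) (hpr : p ≤ r)
    (α : Fin p → Fin r → ℕ)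
    (hα : LinearIndependent ℚ fun j : Fin p => fun i : Fin r => (α j i : ℚ)) :
    (fun q : (Fin r → ℝ) × (Fin s → ℝ) =>
        ((fun j : Fin p => ∏ i, q.1 i ^ α j i), q.2)) ''
      {q : (Fin r → ℝ) × (Fin s → ℝ) | (∀ i, |q.1 i| ≤ 1) ∧ ∀ k, |q.2 k| ≤ 1}
    = ⋃ (T : Finset (Fin r)) (ε : Fin r → ℝ)
        (_ : T.card = r - p ∧ (∀ i ∈ T, ε i = 1 ∨ ε i = -1) ∧
          LinearIndependent ℚ
            fun j : Fin p => fun i : {i : Fin r // i ∉ T} => (α j i.1 : ℚ)),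
        (fun q : (Fin r → ℝ) × (Fin s → ℝ) =>
            ((fun j : Fin p => ∏ i, q.1 i ^ α j i), q.2)) ''
          ({q : (Fin r → ℝ) × (Fin s → ℝ) | (∀ i, |q.1 i| ≤ 1) ∧ ∀ k, |q.2 k| ≤ 1} ∩
            {q : (Fin r → ℝ) × (Fin s → ℝ) | ∀ i ∈ T, q.1 i = ε i}) :=
  monomial_image_of_cube_general p r s α hα
end
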